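/- Suppose G is local with respect to a neighborhood map N : ι → Set ι, i.e. G_i(x) = G_i(y) whenever the states x and y agree on all components in N(i), and suppose N(i) ∩ (F∖F̲) = ∅ for every i ∈ I₁∪I₂∪C. Then the LTS3 step with M = 1 coincides, in every component i ∈ ι, with one global SSPRK3 step with step Δt applied to the full system: x^new = (1/3)x⁰ + (2/3)y₂ + (2/3)Δt·G(y₂), where y₁ = x⁰ + Δt·G(x⁰) and y₂ = (3/4)x⁰ + (1/4)y₁ + (1/4)Δt·G(y₁). -/

import Mathlib

open scoped Classical

/-- The substepping recursion of one LTS3 step. Starting from the state `x0` and the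
stage vectors `x1`, `x2`, with coarse step `Δt` and substep count `M`, it returns the
quintuple `(a^k, P^k, Q^k, R^k, z^{k-1})`: the fine solution after `k` substeps
(meaningful on `F`), the three accumulated interface correction terms (meaningful on
`I₁ ∪ I₂`), and the last third-stage vector `z` computed. -/
noncomputable def lts3Sub {ι : Type*} (F I₁ : Set ι)
    (G : (ι → ℝ) → ι → ℝ) (Δt : ℝ) (M : ℕ) (x0 x1 x2 : ι → ℝ) :
    ℕ → ((ι → ℝ) × (ι → ℝ) × (ι → ℝ) × (ι → ℝ) × (ι → ℝ))
  | 0 => (x0, fun _ => 0, fun _ => 0, fun _ => 0, x0)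
  | k + 1 =>
    let s := lts3Sub F I₁ G Δt M x0 x1 x2 k
    let a := s.1
    let P := s.2.1
    let Q := s.2.2.1
    let R := s.2.2.2.1
    -- interpolation coefficients
    let αk : ℝ := (k : ℝ) / M
    let αt : ℝ := (k : ℝ) ^ 2 / (M : ℝ) ^ 2
    let βk : ℝ := ((k : ℝ) + 1) / M
    let βt : ℝ := (k : ℝ) * ((k : ℝ) + 2) / (M : ℝ) ^ 2
    let γk : ℝ := (2 * (k : ℝ) + 1) / (2 * M)
    let γt : ℝ := (2 * (k : ℝ) ^ 2 + 2 * (k : ℝ) + 1) / (2 * (M : ℝ) ^ 2)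
    -- v^k: a^k on F, the α-interpolant on I₁, x⁰ on I₂ ∪ C
    let v : ι → ℝ := fun i =>
      if i ∈ F then a i
      else if i ∈ I₁ then
        (1 - αk - αt) * x0 i + (αk - αt) * x1 i + 2 * αt * x2 i
      else x0 i
    -- b^k = v^k + (Δt/M)·G(v^k) (used on F)
    let b : ι → ℝ := fun i => v i + (Δt / M) * G v i
    -- w^k: b^k on F, the β-interpolant on I₁, x¹ on I₂ ∪ C
    let w : ι → ℝ := fun i =>
      if i ∈ F then b i
      else if i ∈ I₁ then
        (1 - βk - βt) * x0 i + (βk - βt) * x1 i + 2 * βt * x2 i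
      else x1 i
    -- c^k = (3/4)a^k + (1/4)b^k + (1/4)(Δt/M)·G(w^k) (used on F)
    let c : ι → ℝ := fun i =>
      (3 / 4) * a i + (1 / 4) * b i + (1 / 4) * (Δt / M) * G w i
    -- z^k: c^k on F, the γ-interpolant on I₁, x² on I₂ ∪ C
    let z : ι → ℝ := fun i =>
      if i ∈ F then c i
      else if i ∈ I₁ then
        (1 - γk - γt) * x0 i + (γk - γt) * x1 i + 2 * γt * x2 i
      else x2 i
    (fun i => (1 / 3) * a i + (2 / 3) * c i + (2 / 3) * (Δt / M) * G z i,
     fun i => P i + G v i,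
     fun i => Q i + G w i,
     fun i => R i + G z i,
     z)

/-- One step of the third-order local time-stepping scheme LTS3, with fine region `F`,
fine cells nearest interface 1 `Fu = F̲ ⊆ F`, interface regions `I₁`, `I₂`, coarse
region `C`, right-hand side `G`, coarse step `Δt` and `M` fine substeps per coarse
step. -/
noncomputable def lts3Step {ι : Type*} (F Fu I₁ I₂ C : Set ι)
    (G : (ι → ℝ) → ι → ℝ) (Δt : ℝ) (M : ℕ) (x0 : ι → ℝ) : ι → ℝ :=
  -- x¹ = x⁰ + Δt·G(x⁰) on F̲ ∪ I₁ ∪ I₂ ∪ C, and x¹ = x⁰ on F \ F̲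
  let x1 : ι → ℝ := fun i =>
    if i ∈ F ∧ i ∉ Fu then x0 i else x0 i + Δt * G x0 i
  -- x² = (3/4)x⁰ + (1/4)x¹ + (1/4)Δt·G(x¹) (used on I₁ ∪ I₂ ∪ C)
  let x2 : ι → ℝ := fun i =>
    (3 / 4) * x0 i + (1 / 4) * x1 i + (1 / 4) * Δt * G x1 i
  let s := lts3Sub F I₁ G Δt M x0 x1 x2 M
  fun i =>
    if i ∈ F then s.1 i
    else if i ∈ C then
      (1 / 3) * x0 i + (2 / 3) * x2 i + (2 / 3) * Δt * G s.2.2.2.2 i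
    else
      x0 i + (Δt / M) *
        ((1 / 6) * s.2.1 i + (1 / 6) * s.2.2.1 i + (2 / 3) * s.2.2.2.1 i)

/-!
With a single substep the interpolation weights collapse (`α = α̃ = 0`, `β = 1`, `β̃ = 0`,
`γ = γ̃ = 1/2`), so the interface vectors `v, w, z` are just `x⁰, x¹, x²` and the fine update
is itself an SSPRK3 step. The LTS stage vectors `x¹, x²` differ from the SSPRK3 stages
`y₁, y₂` only on `F`: `x¹` freezes `F \ F̲`, which no component outside `F` sees, so by
locality `G(x¹)` and `G(y₁)` agree off `F`. On the interfaces the output is the same step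
written with the Butcher weights `1/6, 1/6, 2/3`.
-/

noncomputable section

section SSPRK3

variable {E : Type*} [AddCommGroup E] [Module ℝ E] (G : E → E) (Δt : ℝ)

def ssprk3Stage1 (x : E) : E := x + Δt • G x

def ssprk3Stage2 (x : E) : E :=
  (3 / 4 : ℝ) • x + (1 / 4 : ℝ) • ssprk3Stage1 G Δt x + (1 / 4 * Δt) • G (ssprk3Stage1 G Δt x)

def ssprk3Step (x : E) : E :=
  (1 / 3 : ℝ) • x + (2 / 3 : ℝ) • ssprk3Stage2 G Δt x + (2 / 3 * Δt) • G (ssprk3Stage2 G Δt x)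

theorem ssprk3Step_eq_add_smul (x : E) :
    ssprk3Step G Δt x = x + Δt • ((1 / 6 : ℝ) • G x + (1 / 6 : ℝ) • G (ssprk3Stage1 G Δt x)
      + (2 / 3 : ℝ) • G (ssprk3Stage2 G Δt x)) := by
  unfold ssprk3Step ssprk3Stage2 ssprk3Stage1
  module

end SSPRK3

def IsLocal {ι α β : Type*} (G : (ι → α) → ι → β) (N : ι → Set ι) : Prop :=
  ∀ (i : ι) (x y : ι → α), (∀ j ∈ N i, x j = y j) → G x i = G y i

theorem IsLocal.apply_eq_of_eqOn_compl {ι α β : Type*} {G : (ι → α) → ι → β}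
    {N : ι → Set ι} (hG : IsLocal G N) {S : Set ι} {x y : ι → α} (hxy : ∀ j ∉ S, x j = y j)
    {i : ι} (hi : N i ∩ S = ∅) : G x i = G y i :=
  hG i x y fun j hj => hxy j fun hjS => hi.subset ⟨hj, hjS⟩

theorem ite_mem_eq_of_eqOn_compl {ι α : Type*} {F : Set ι} [DecidablePred (· ∈ F)]
    {x y : ι → α} (h : ∀ j ∉ F, x j = y j) : (fun j => if j ∈ F then y j else x j) = y :=
  funext fun j => by
    by_cases hj : j ∈ F
    · exact if_pos hj
    · exact (if_neg hj).trans (h j hj)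

section LTS3

variable {ι : Type*} (F Fu I₁ I₂ C : Set ι) (G : (ι → ℝ) → ι → ℝ) (Δt : ℝ) (x0 : ι → ℝ)

def lts3Stage1 : ι → ℝ := fun i => if i ∈ F ∧ i ∉ Fu then x0 i else x0 i + Δt * G x0 i

def lts3Stage2 : ι → ℝ := fun i =>
  (3 / 4) * x0 i + (1 / 4) * lts3Stage1 F Fu G Δt x0 i
    + (1 / 4) * Δt * G (lts3Stage1 F Fu G Δt x0) i

theorem lts3Step_apply (M : ℕ) (i : ι) : lts3Step F Fu I₁ I₂ C G Δt M x0 i =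
    let s := lts3Sub F I₁ G Δt M x0 (lts3Stage1 F Fu G Δt x0) (lts3Stage2 F Fu G Δt x0) M
    if i ∈ F then s.1 i
    else if i ∈ C then
      (1 / 3) * x0 i + (2 / 3) * lts3Stage2 F Fu G Δt x0 i + (2 / 3) * Δt * G s.2.2.2.2 i
    else
      x0 i + (Δt / M) * ((1 / 6) * s.2.1 i + (1 / 6) * s.2.2.1 i + (2 / 3) * s.2.2.2.1 i) :=
  rfl

theorem lts3Stage1_eq_of_notMem {j : ι} (hj : j ∉ F \ Fu) :
    lts3Stage1 F Fu G Δt x0 j = ssprk3Stage1 G Δt x0 j :=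
  if_neg hj

variable {F Fu G} in
theorem lts3Stage2_eq_of_notMem {N : ι → Set ι} (hG : IsLocal G N)
    (hN : ∀ j ∉ F, N j ∩ (F \ Fu) = ∅) {j : ι} (hj : j ∉ F) :
    lts3Stage2 F Fu G Δt x0 j = ssprk3Stage2 G Δt x0 j := by
  have hx1 : ∀ k ∉ F \ Fu, lts3Stage1 F Fu G Δt x0 k = ssprk3Stage1 G Δt x0 k :=
    fun k hk => lts3Stage1_eq_of_notMem F Fu G Δt x0 hk
  have hGx1 : G (lts3Stage1 F Fu G Δt x0) j = G (ssprk3Stage1 G Δt x0) j :=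
    hG.apply_eq_of_eqOn_compl hx1 (hN j hj)
  rw [lts3Stage2, hx1 j (fun h => hj h.1), hGx1]
  rfl

theorem lts3Sub_one_one {x1 x2 : ι → ℝ} (hx1 : ∀ j ∉ F, x1 j = ssprk3Stage1 G Δt x0 j)
    (hx2 : ∀ j ∉ F, x2 j = ssprk3Stage2 G Δt x0 j) :
    lts3Sub F I₁ G Δt 1 x0 x1 x2 1 = (ssprk3Step G Δt x0, G x0, G (ssprk3Stage1 G Δt x0),
      G (ssprk3Stage2 G Δt x0), ssprk3Stage2 G Δt x0) := by
  have hw : (fun j => if j ∈ F then x0 j + Δt * G x0 j else x1 j) = ssprk3Stage1 G Δt x0 :=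
    ite_mem_eq_of_eqOn_compl hx1
  have hz : (fun j => if j ∈ F then 3 / 4 * x0 j + 1 / 4 * (x0 j + Δt * G x0 j)
      + 1 / 4 * Δt * G (ssprk3Stage1 G Δt x0) j else x2 j) = ssprk3Stage2 G Δt x0 :=
    ite_mem_eq_of_eqOn_compl hx2
  rw [lts3Sub, lts3Sub]
  norm_num
  simp only [hw, hz, and_true]
  rfl

end LTS3

end

theorem lts3_M_eq_one_is_ssprk3_general {ι : Type*}
    (F Fu I₁ I₂ C : Set ι)
    (hcover : ∀ i : ι, i ∈ F ∨ i ∈ I₁ ∨ i ∈ I₂ ∨ i ∈ C)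
    (G : (ι → ℝ) → ι → ℝ) (Δt : ℝ)
    (N : ι → Set ι)
    (hlocal : ∀ (i : ι) (x y : ι → ℝ), (∀ j ∈ N i, x j = y j) → G x i = G y i)
    (hN : ∀ i ∈ I₁ ∪ I₂ ∪ C, N i ∩ (F \ Fu) = ∅)
    (x0 : ι → ℝ) :
    ∀ i : ι, lts3Step F Fu I₁ I₂ C G Δt 1 x0 i =
      (fun (y1 : ι → ℝ) =>
        (fun (y2 : ι → ℝ) =>
          (1 / 3) * x0 i + (2 / 3) * y2 i + (2 / 3) * Δt * G y2 i)
        (fun j => (3 / 4) * x0 j + (1 / 4) * y1 j + (1 / 4) * Δt * G y1 j))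
      (fun j => x0 j + Δt * G x0 j) := by
  have hN_off : ∀ j ∉ F, N j ∩ (F \ Fu) = ∅ := fun j hj =>
    hN j (by rcases hcover j with h | h | h | h <;> simp_all)
  have hx1 : ∀ j ∉ F, lts3Stage1 F Fu G Δt x0 j = ssprk3Stage1 G Δt x0 j :=
    fun j hj => lts3Stage1_eq_of_notMem F Fu G Δt x0 fun h => hj h.1
  have hx2 : ∀ j ∉ F, lts3Stage2 F Fu G Δt x0 j = ssprk3Stage2 G Δt x0 j :=
    fun j => lts3Stage2_eq_of_notMem Δt x0 hlocal hN_off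
  intro i
  change _ = ssprk3Step G Δt x0 i
  rw [lts3Step_apply, lts3Sub_one_one F I₁ G Δt x0 hx1 hx2]
  dsimp only
  split_ifs with hF hC
  · rfl
  · rw [hx2 i hF]
    rfl
  · rw [ssprk3Step_eq_add_smul]
    simp only [Pi.add_apply, Pi.smul_apply, smul_eq_mul, Nat.cast_one, div_one]

/-- If `G` is local with respect to a neighborhood map `N` and no component in
`I₁ ∪ I₂ ∪ C` sees the fine cells away from the interface (`N(i) ∩ (F \ F̲) = ∅` for
`i ∈ I₁ ∪ I₂ ∪ C`), then the LTS3 step with `M = 1` coincides, in every component, with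
one global SSPRK3 step with step `Δt` applied to the full system. -/
theorem lts3_M_eq_one_is_ssprk3 {ι : Type*} [Fintype ι]
    (F Fu I₁ I₂ C : Set ι) (hFu : Fu ⊆ F)
    (hcover : ∀ i : ι, i ∈ F ∨ i ∈ I₁ ∨ i ∈ I₂ ∨ i ∈ C)
    (hFI₁ : F ∩ I₁ = ∅) (hFI₂ : F ∩ I₂ = ∅) (hFC : F ∩ C = ∅)
    (hI₁I₂ : I₁ ∩ I₂ = ∅) (hI₁C : I₁ ∩ C = ∅) (hI₂C : I₂ ∩ C = ∅)
    (G : (ι → ℝ) → ι → ℝ) (Δt : ℝ)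
    (N : ι → Set ι)
    (hlocal : ∀ (i : ι) (x y : ι → ℝ), (∀ j ∈ N i, x j = y j) → G x i = G y i)
    (hN : ∀ i ∈ I₁ ∪ I₂ ∪ C, N i ∩ (F \ Fu) = ∅)
    (x0 : ι → ℝ) :
    ∀ i : ι, lts3Step F Fu I₁ I₂ C G Δt 1 x0 i =
      (fun (y1 : ι → ℝ) =>
        (fun (y2 : ι → ℝ) =>
          (1 / 3) * x0 i + (2 / 3) * y2 i + (2 / 3) * Δt * G y2 i)
        (fun j => (3 / 4) * x0 j + (1 / 4) * y1 j + (1 / 4) * Δt * G y1 j))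
      (fun j => x0 j + Δt * G x0 j) :=
  lts3_M_eq_one_is_ssprk3_general F Fu I₁ I₂ C hcover G Δt N hlocal hN x0
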